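/- For a vector v ∈ R^k, suppose θ* ∈ R is such that the vector w = max(v - θ*·𝟙, 0) (componentwise) satisfies Σ_j w_j = 1. Then w is the Euclidean projection of v onto the probability simplex Δ^{k-1}, i.e., w uniquely minimizes ‖v - q‖² over q ∈ Δ^{k-1}. -/
import Mathlib


/-- Soft-thresholding characterization of the Euclidean projection onto the
probability simplex: if `w = max(v - θ*·𝟙, 0)` sums to one, then `w` is the
unique minimizer of `‖v - q‖²` over the simplex. -/
theorem simplex_projection_soft_threshold (k : ℕ) (v : Fin k → ℝ) (θ : ℝ)
    (w : Fin k → ℝ) (hw : w = fun j => max (v j - θ) 0)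
    (hsum : ∑ j, w j = 1) :
    (∀ j, 0 ≤ w j) ∧ (∑ j, w j = 1) ∧
      ∀ q : Fin k → ℝ, (∀ j, 0 ≤ q j) → (∑ j, q j = 1) →
        (∑ j, (v j - w j) ^ 2 ≤ ∑ j, (v j - q j) ^ 2) ∧
        (∑ j, (v j - q j) ^ 2 = ∑ j, (v j - w j) ^ 2 → q = w) := by
  have hwnn : ∀ j, 0 ≤ w j := by intro j; rw [hw]; exact le_max_right _ _
  set μ : Fin k → ℝ := fun j => v j - w j - θ with hμ
  have hμ0 : ∀ j, μ j ≤ 0 := by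
    intro j
    simp only [hμ, hw]
    rcases le_or_gt (v j - θ) 0 with h | h
    · rw [max_eq_right h]; linarith
    · rw [max_eq_left h.le]; linarith
  have hμw : ∀ j, μ j * w j = 0 := by
    intro j
    simp only [hμ, hw]
    rcases le_or_gt (v j - θ) 0 with h | h
    · rw [max_eq_right h]; ring
    · rw [max_eq_left h.le]; ring
  refine ⟨hwnn, hsum, fun q hq0 hq1 => ?_⟩
  have hpt : ∀ j : Fin k, (v j - q j) ^ 2 =
      (v j - w j) ^ 2 + (w j - q j) ^ 2 + 2 * θ * (w j - q j) - 2 * (μ j * q j) := by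
    intro j
    have h := hμw j
    simp only [hμ] at h ⊢
    nlinarith [h]
  have hS : ∑ j, μ j * q j ≤ 0 :=
    Finset.sum_nonpos fun j _ => mul_nonpos_of_nonpos_of_nonneg (hμ0 j) (hq0 j)
  have hsum2 : ∑ j, (v j - q j) ^ 2 =
      (∑ j, (v j - w j) ^ 2) + (∑ j, (w j - q j) ^ 2) - 2 * ∑ j, μ j * q j := by
    calc ∑ j, (v j - q j) ^ 2
        = ∑ j, ((v j - w j) ^ 2 + (w j - q j) ^ 2 + 2 * θ * (w j - q j) - 2 * (μ j * q j)) :=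
          Finset.sum_congr rfl fun j _ => hpt j
      _ = (∑ j, (v j - w j) ^ 2) + (∑ j, (w j - q j) ^ 2)
            + 2 * θ * ((∑ j, w j) - ∑ j, q j) - 2 * ∑ j, μ j * q j := by
          simp [Finset.sum_add_distrib, Finset.sum_sub_distrib, Finset.mul_sum,
            mul_sub, Finset.sum_sub_distrib]
      _ = _ := by rw [hsum, hq1]; ring
  have hsq : 0 ≤ ∑ j, (w j - q j) ^ 2 :=
    Finset.sum_nonneg fun j _ => sq_nonneg _
  constructor
  · linarith
  · intro heq
    have hz : ∑ j, (w j - q j) ^ 2 = 0 := by linarith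
    have := (Finset.sum_eq_zero_iff_of_nonneg (fun j _ => sq_nonneg (w j - q j))).mp hz
    funext j
    have := this j (Finset.mem_univ j)
    have : w j - q j = 0 := by nlinarith [this]
    linarith
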